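/- arXiv:1206.1206 — 4 statements merged into one kernel-verified Lean document; each statement's English description precedes it below -/
import Mathlib

section
/- Let F be a field of characteristic 2, let v and x be elements of SL₂(F) with tr(x) = s and tr([v,x]) = t, and let w = [[v,x],x]. Then tr(w) = t² + t·s². -/
open Matrix MatrixGroups

set_option maxHeartbeats 4000000 in
theorem trace_double_commutator_char_two {F : Type*} [Field F] [CharP F 2]
    (v x : SL(2, F)) (s t : F)
    (hs : Matrix.trace ((x : Matrix (Fin 2) (Fin 2) F)) = s)
    (ht : Matrix.trace ((v⁻¹ * x⁻¹ * v * x : SL(2, F)) : Matrix (Fin 2) (Fin 2) F) = t) :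
    Matrix.trace
        (((v⁻¹ * x⁻¹ * v * x)⁻¹ * x⁻¹ * (v⁻¹ * x⁻¹ * v * x) * x : SL(2, F)) :
          Matrix (Fin 2) (Fin 2) F) = t ^ 2 + t * s ^ 2 := by
  subst hs ht
  have h2 : (2 : F) = 0 := by
    have := CharP.cast_eq_zero F 2; simpa using this
  have hdv : (v : Matrix (Fin 2) (Fin 2) F) 0 0 * (v : Matrix (Fin 2) (Fin 2) F) 1 1 -
      (v : Matrix (Fin 2) (Fin 2) F) 0 1 * (v : Matrix (Fin 2) (Fin 2) F) 1 0 = 1 := by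
    have := v.prop; rwa [Matrix.det_fin_two] at this
  have hdx : (x : Matrix (Fin 2) (Fin 2) F) 0 0 * (x : Matrix (Fin 2) (Fin 2) F) 1 1 -
      (x : Matrix (Fin 2) (Fin 2) F) 0 1 * (x : Matrix (Fin 2) (Fin 2) F) 1 0 = 1 := by
    have := x.prop; rwa [Matrix.det_fin_two] at this
  set V : Matrix (Fin 2) (Fin 2) F := (v : Matrix (Fin 2) (Fin 2) F) with hV
  set X : Matrix (Fin 2) (Fin 2) F := (x : Matrix (Fin 2) (Fin 2) F) with hX
  simp only [Matrix.SpecialLinearGroup.coe_mul, Matrix.SpecialLinearGroup.coe_inv,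
    Matrix.adjugate_fin_two, Matrix.trace_fin_two, Matrix.mul_apply, Fin.sum_univ_two,
    Matrix.cons_val', Matrix.cons_val_zero, Matrix.cons_val_one, Matrix.head_cons,
    Matrix.head_fin_const, Matrix.empty_val', Matrix.cons_val_fin_one, Matrix.of_apply,
    ← hV, ← hX]
  linear_combination
      ((-2:F) * X 0 1^2 * X 1 0^2 + (2:F) * X 0 1^2 * X 1 0^2 * X 1 1^2 + (-2:F) * X 0 0 * X 1 1^3 + (-2:F) * X 0 0 * X 0 1 * X 1 0 * X 1 1^3 + (-8:F) * X 0 0^2 * X 1 1^2 + (-2:F) * X 0 0^2 * X 0 1 * X 1 0 * X 1 1^2 + (2:F) * X 0 0^2 * X 0 1^2 * X 1 0^2 + (-2:F) * X 0 0^3 * X 1 1 + (2:F) * X 0 0^3 * X 1 1^3 + (-2:F) * X 0 0^3 * X 0 1 * X 1 0 * X 1 1 + (-1:F) * V 1 1^2 * X 0 1^2 * X 1 0^2 * X 1 1^2 + (4:F) * V 1 1^2 * X 0 0 * X 0 1 * X 1 0 * X 1 1 + V 1 1^2 * X 0 0 * X 0 1 * X 1 0 * X 1 1^3 + (2:F)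 * V 1 1^2 * X 0 0 * X 0 1^2 * X 1 0^2 * X 1 1 + (-2:F) * V 1 1^2 * X 0 0^2 * X 0 1 * X 1 0 * X 1 1^2 + (-1:F) * V 1 1^2 * X 0 0^2 * X 0 1^2 * X 1 0^2 + V 1 1^2 * X 0 0^3 * X 0 1 * X 1 0 * X 1 1 + (-2:F) * V 1 0 * V 1 1 * X 0 1^2 * X 1 0 * X 1 1 + V 1 0 * V 1 1 * X 0 1^2 * X 1 0 * X 1 1^3 + (-2:F) * V 1 0 * V 1 1 * X 0 1^3 * X 1 0^2 * X 1 1 + (-4:F) * V 1 0 * V 1 1 * X 0 0 * X 0 1 * X 1 1^2 + (-1:F) * V 1 0 * V 1 1 * X 0 0 * X 0 1 * X 1 1^4 + (2:F) * V 1 0 * V 1 1 * X 0 0 * X 0 1^2 * X 1 0 + (-1:F) * V 1 0 * V 1 1 * X 0 0 * X 0 1^2 * X 1 0 * X 1 1^2 + (2:F) * V 1 0 * V 1 1 * X 0 0 * X 0 1^3 * X 1 0^2 + (4:F) * V 1 0 * V 1 1 * X 0 0^2 * X 0 1 * X 1 1 + (3:F) * V 1 0 * V 1 1 * X 0 0^2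 * X 0 1 * X 1 1^3 + V 1 0 * V 1 1 * X 0 0^2 * X 0 1^2 * X 1 0 * X 1 1 + (-3:F) * V 1 0 * V 1 1 * X 0 0^3 * X 0 1 * X 1 1^2 + (-1:F) * V 1 0 * V 1 1 * X 0 0^3 * X 0 1^2 * X 1 0 + V 1 0 * V 1 1 * X 0 0^4 * X 0 1 * X 1 1 + (2:F) * V 1 0^2 * X 0 1^2 * X 1 1^2 + (3:F) * V 1 0^2 * X 0 1^3 * X 1 0 * X 1 1^2 + (-8:F) * V 1 0^2 * X 0 0 * X 0 1^2 * X 1 1 + (-3:F) * V 1 0^2 * X 0 0 * X 0 1^2 * X 1 1^3 + (-6:F) * V 1 0^2 * X 0 0 * X 0 1^3 * X 1 0 * X 1 1 + (2:F) * V 1 0^2 * X 0 0^2 * X 0 1^2 + (6:F) * V 1 0^2 * X 0 0^2 * X 0 1^2 * X 1 1^2 + (3:F) * V 1 0^2 * X 0 0^2 * X 0 1^3 * X 1 0 + (-3:F) * V 1 0^2 * X 0 0^3 * X 0 1^2 * X 1 1 + (-2:F) * V 0 1 * V 1 1 * X 0 1 * X 1 0^2 * X 1 1 + V 0 1 * V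 1 1 * X 0 1 * X 1 0^2 * X 1 1^3 + (-2:F) * V 0 1 * V 1 1 * X 0 1^2 * X 1 0^3 * X 1 1 + (-4:F) * V 0 1 * V 1 1 * X 0 0 * X 1 0 * X 1 1^2 + (-1:F) * V 0 1 * V 1 1 * X 0 0 * X 1 0 * X 1 1^4 + (2:F) * V 0 1 * V 1 1 * X 0 0 * X 0 1 * X 1 0^2 + (-1:F) * V 0 1 * V 1 1 * X 0 0 * X 0 1 * X 1 0^2 * X 1 1^2 + (2:F) * V 0 1 * V 1 1 * X 0 0 * X 0 1^2 * X 1 0^3 + (4:F) * V 0 1 * V 1 1 * X 0 0^2 * X 1 0 * X 1 1 + (3:F) * V 0 1 * V 1 1 * X 0 0^2 * X 1 0 * X 1 1^3 + V 0 1 * V 1 1 * X 0 0^2 * X 0 1 * X 1 0^2 * X 1 1 + (-3:F) * V 0 1 * V 1 1 * X 0 0^3 * X 1 0 * X 1 1^2 + (-1:F) * V 0 1 * V 1 1 * X 0 0^3 * X 0 1 * X 1 0^2 + V 0 1 * V 1 1 * X 0 0^4 * X 1 0 * X 1 1 + (4:F) * V 0 1 * V 1 0 * X 0 1 * X 1 0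 * X 1 1^2 + (-1:F) * V 0 1 * V 1 0 * X 0 1 * X 1 0 * X 1 1^4 + (-2:F) * V 0 1 * V 1 0 * X 0 1^2 * X 1 0^2 + (2:F) * V 0 1 * V 1 0 * X 0 1^2 * X 1 0^2 * X 1 1^2 + (-4:F) * V 0 1 * V 1 0 * X 0 1^3 * X 1 0^3 + (4:F) * V 0 1 * V 1 0 * X 0 0 * X 1 1^3 + V 0 1 * V 1 0 * X 0 0 * X 1 1^5 + (-8:F) * V 0 1 * V 1 0 * X 0 0 * X 0 1 * X 1 0 * X 1 1 + (2:F) * V 0 1 * V 1 0 * X 0 0 * X 0 1 * X 1 0 * X 1 1^3 + (-4:F) * V 0 1 * V 1 0 * X 0 0 * X 0 1^2 * X 1 0^2 * X 1 1 + (-4:F) * V 0 1 * V 1 0 * X 0 0^2 * X 1 1^2 + (-4:F) * V 0 1 * V 1 0 * X 0 0^2 * X 1 1^4 + (4:F) * V 0 1 * V 1 0 * X 0 0^2 * X 0 1 * X 1 0 + (4:F) * V 0 1 * V 1 0 * X 0 0^2 * X 0 1 * X 1 0 * X 1 1^2 + (2:F) * V 0 1 * V 1 0 * X 0 0^2 *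 X 0 1^2 * X 1 0^2 + (4:F) * V 0 1 * V 1 0 * X 0 0^3 * X 1 1 + (4:F) * V 0 1 * V 1 0 * X 0 0^3 * X 1 1^3 + (2:F) * V 0 1 * V 1 0 * X 0 0^3 * X 0 1 * X 1 0 * X 1 1 + (-4:F) * V 0 1 * V 1 0 * X 0 0^4 * X 1 1^2 + (-1:F) * V 0 1 * V 1 0 * X 0 0^4 * X 0 1 * X 1 0 + V 0 1 * V 1 0 * X 0 0^5 * X 1 1 + (2:F) * V 0 1^2 * X 1 0^2 * X 1 1^2 + (3:F) * V 0 1^2 * X 0 1 * X 1 0^3 * X 1 1^2 + (-8:F) * V 0 1^2 * X 0 0 * X 1 0^2 * X 1 1 + (-3:F) * V 0 1^2 * X 0 0 * X 1 0^2 * X 1 1^3 + (-6:F) * V 0 1^2 * X 0 0 * X 0 1 * X 1 0^3 * X 1 1 + (2:F) * V 0 1^2 * X 0 0^2 * X 1 0^2 + (6:F) * V 0 1^2 * X 0 0^2 * X 1 0^2 * X 1 1^2 + (3:F) * V 0 1^2 * X 0 0^2 * X 0 1 * X 1 0^3 + (-3:F) * V 0 1^2 * X 0 0^3 * X 1 0^2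 * X 1 1 + (-2:F) * V 0 0 * V 1 1 * X 0 1^2 * X 1 0^2 + (2:F) * V 0 0 * V 1 1 * X 0 1^2 * X 1 0^2 * X 1 1^2 + (-2:F) * V 0 0 * V 1 1 * X 0 0 * X 0 1 * X 1 0 * X 1 1^3 + (-4:F) * V 0 0 * V 1 1 * X 0 0^2 * X 1 1^2 + (-2:F) * V 0 0 * V 1 1 * X 0 0^2 * X 0 1 * X 1 0 * X 1 1^2 + (2:F) * V 0 0 * V 1 1 * X 0 0^2 * X 0 1^2 * X 1 0^2 + (2:F) * V 0 0 * V 1 1 * X 0 0^3 * X 1 1^3 + (-2:F) * V 0 0 * V 1 1 * X 0 0^3 * X 0 1 * X 1 0 * X 1 1 + (2:F) * V 0 0 * V 1 0 * X 0 1^2 * X 1 0 * X 1 1 + (-1:F) * V 0 0 * V 1 0 * X 0 1^2 * X 1 0 * X 1 1^3 + (2:F) * V 0 0 * V 1 0 * X 0 1^3 * X 1 0^2 * X 1 1 + (4:F) * V 0 0 * V 1 0 * X 0 0 * X 0 1 * X 1 1^2 + V 0 0 * V 1 0 * X 0 0 * X 0 1 * X 1 1^4 + (-2:F) * V 0 0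 * V 1 0 * X 0 0 * X 0 1^2 * X 1 0 + V 0 0 * V 1 0 * X 0 0 * X 0 1^2 * X 1 0 * X 1 1^2 + (-2:F) * V 0 0 * V 1 0 * X 0 0 * X 0 1^3 * X 1 0^2 + (-4:F) * V 0 0 * V 1 0 * X 0 0^2 * X 0 1 * X 1 1 + (-3:F) * V 0 0 * V 1 0 * X 0 0^2 * X 0 1 * X 1 1^3 + (-1:F) * V 0 0 * V 1 0 * X 0 0^2 * X 0 1^2 * X 1 0 * X 1 1 + (3:F) * V 0 0 * V 1 0 * X 0 0^3 * X 0 1 * X 1 1^2 + V 0 0 * V 1 0 * X 0 0^3 * X 0 1^2 * X 1 0 + (-1:F) * V 0 0 * V 1 0 * X 0 0^4 * X 0 1 * X 1 1 + (2:F) * V 0 0 * V 0 1 * X 0 1 * X 1 0^2 * X 1 1 + (-1:F) * V 0 0 * V 0 1 * X 0 1 * X 1 0^2 * X 1 1^3 + (2:F) * V 0 0 * V 0 1 * X 0 1^2 * X 1 0^3 * X 1 1 + (4:F) * V 0 0 * V 0 1 * X 0 0 * X 1 0 * X 1 1^2 + V 0 0 * V 0 1 * X 0 0 * X 1 0 *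 X 1 1^4 + (-2:F) * V 0 0 * V 0 1 * X 0 0 * X 0 1 * X 1 0^2 + V 0 0 * V 0 1 * X 0 0 * X 0 1 * X 1 0^2 * X 1 1^2 + (-2:F) * V 0 0 * V 0 1 * X 0 0 * X 0 1^2 * X 1 0^3 + (-4:F) * V 0 0 * V 0 1 * X 0 0^2 * X 1 0 * X 1 1 + (-3:F) * V 0 0 * V 0 1 * X 0 0^2 * X 1 0 * X 1 1^3 + (-1:F) * V 0 0 * V 0 1 * X 0 0^2 * X 0 1 * X 1 0^2 * X 1 1 + (3:F) * V 0 0 * V 0 1 * X 0 0^3 * X 1 0 * X 1 1^2 + V 0 0 * V 0 1 * X 0 0^3 * X 0 1 * X 1 0^2 + (-1:F) * V 0 0 * V 0 1 * X 0 0^4 * X 1 0 * X 1 1 + (-1:F) * V 0 0^2 * X 0 1^2 * X 1 0^2 * X 1 1^2 + (4:F) * V 0 0^2 * X 0 0 * X 0 1 * X 1 0 * X 1 1 + V 0 0^2 * X 0 0 * X 0 1 * X 1 0 * X 1 1^3 + (2:F) * V 0 0^2 * X 0 0 * X 0 1^2 * X 1 0^2 * X 1 1 + (-2:F) * V 0 0^2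 * X 0 0^2 * X 0 1 * X 1 0 * X 1 1^2 + (-1:F) * V 0 0^2 * X 0 0^2 * X 0 1^2 * X 1 0^2 + V 0 0^2 * X 0 0^3 * X 0 1 * X 1 0 * X 1 1) * hdv +
      ((-6:F) + (-2:F) * X 1 1^2 + (-6:F) * X 0 1 * X 1 0 + (-2:F) * X 0 1 * X 1 0 * X 1 1^2 + (-6:F) * X 0 0 * X 1 1 + (-2:F) * X 0 0^2 + (2:F) * X 0 0^2 * X 1 1^2 + (-2:F) * X 0 0^2 * X 0 1 * X 1 0 + (4:F) * V 1 1^2 * X 0 1 * X 1 0 + V 1 1^2 * X 0 1 * X 1 0 * X 1 1^2 + (-2:F) * V 1 1^2 * X 0 0 * X 0 1 * X 1 0 * X 1 1 + V 1 1^2 * X 0 0^2 * X 0 1 * X 1 0 + V 1 1^4 * X 0 1^2 * X 1 0^2 + (-2:F) * V 1 0 * V 1 1 * X 0 1 * X 1 1 + (-1:F) * V 1 0 * V 1 1 * X 0 1 * X 1 1^3 + (2:F) * V 1 0 * V 1 1 * X 0 1^2 * X 1 0 * X 1 1 + (2:F) * V 1 0 * V 1 1 * X 0 0 * X 0 1 +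 (3:F) * V 1 0 * V 1 1 * X 0 0 * X 0 1 * X 1 1^2 + (-2:F) * V 1 0 * V 1 1 * X 0 0 * X 0 1^2 * X 1 0 + (-3:F) * V 1 0 * V 1 1 * X 0 0^2 * X 0 1 * X 1 1 + V 1 0 * V 1 1 * X 0 0^3 * X 0 1 + (-2:F) * V 1 0 * V 1 1^3 * X 0 1^2 * X 1 0 * X 1 1 + (2:F) * V 1 0 * V 1 1^3 * X 0 0 * X 0 1^2 * X 1 0 + (-4:F) * V 1 0^2 * X 0 1^2 + (-3:F) * V 1 0^2 * X 0 1^2 * X 1 1^2 + (6:F) * V 1 0^2 * X 0 0 * X 0 1^2 * X 1 1 + (-3:F) * V 1 0^2 * X 0 0^2 * X 0 1^2 + V 1 0^2 * V 1 1^2 * X 0 1^2 * X 1 1^2 + (-2:F) * V 1 0^2 * V 1 1^2 * X 0 1^3 * X 1 0 + (-2:F) * V 1 0^2 * V 1 1^2 * X 0 0 * X 0 1^2 * X 1 1 + V 1 0^2 * V 1 1^2 * X 0 0^2 * X 0 1^2 + (2:F) * V 1 0^3 * V 1 1 * X 0 1^3 * X 1 1 + (-2:F) * V 1 0^3 * V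 1 1 * X 0 0 * X 0 1^3 + V 1 0^4 * X 0 1^4 + (-2:F) * V 0 1 * V 1 1 * X 1 0 * X 1 1 + (-1:F) * V 0 1 * V 1 1 * X 1 0 * X 1 1^3 + (2:F) * V 0 1 * V 1 1 * X 0 1 * X 1 0^2 * X 1 1 + (2:F) * V 0 1 * V 1 1 * X 0 0 * X 1 0 + (3:F) * V 0 1 * V 1 1 * X 0 0 * X 1 0 * X 1 1^2 + (-2:F) * V 0 1 * V 1 1 * X 0 0 * X 0 1 * X 1 0^2 + (-3:F) * V 0 1 * V 1 1 * X 0 0^2 * X 1 0 * X 1 1 + V 0 1 * V 1 1 * X 0 0^3 * X 1 0 + (-2:F) * V 0 1 * V 1 1^3 * X 0 1 * X 1 0^2 * X 1 1 + (2:F) * V 0 1 * V 1 1^3 * X 0 0 * X 0 1 * X 1 0^2 + (-4:F) * V 0 1 * V 1 0 + V 0 1 * V 1 0 * X 1 1^4 + (-4:F) * V 0 1 * V 1 0 * X 0 1 * X 1 0 + (-4:F) * V 0 1 * V 1 0 * X 0 1 * X 1 0 * X 1 1^2 + (4:F) * V 0 1 * V 1 0 * X 0 1^2 * X 1 0^2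 + (-4:F) * V 0 1 * V 1 0 * X 0 0 * X 1 1 + (-4:F) * V 0 1 * V 1 0 * X 0 0 * X 1 1^3 + (8:F) * V 0 1 * V 1 0 * X 0 0 * X 0 1 * X 1 0 * X 1 1 + (6:F) * V 0 1 * V 1 0 * X 0 0^2 * X 1 1^2 + (-4:F) * V 0 1 * V 1 0 * X 0 0^2 * X 0 1 * X 1 0 + (-4:F) * V 0 1 * V 1 0 * X 0 0^3 * X 1 1 + V 0 1 * V 1 0 * X 0 0^4 + (4:F) * V 0 1 * V 1 0 * V 1 1^2 * X 0 1 * X 1 0 * X 1 1^2 + (-8:F) * V 0 1 * V 1 0 * V 1 1^2 * X 0 0 * X 0 1 * X 1 0 * X 1 1 + (4:F) * V 0 1 * V 1 0 * V 1 1^2 * X 0 0^2 * X 0 1 * X 1 0 + (-2:F) * V 0 1 * V 1 0^2 * V 1 1 * X 0 1 * X 1 1^3 + (4:F) * V 0 1 * V 1 0^2 * V 1 1 * X 0 1^2 * X 1 0 * X 1 1 + (6:F) * V 0 1 * V 1 0^2 * V 1 1 * X 0 0 * X 0 1 * X 1 1^2 + (-4:F) * V 0 1 * V 1 0^2 * V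 1 1 * X 0 0 * X 0 1^2 * X 1 0 + (-6:F) * V 0 1 * V 1 0^2 * V 1 1 * X 0 0^2 * X 0 1 * X 1 1 + (2:F) * V 0 1 * V 1 0^2 * V 1 1 * X 0 0^3 * X 0 1 + (-4:F) * V 0 1 * V 1 0^3 * X 0 1^2 * X 1 1^2 + (8:F) * V 0 1 * V 1 0^3 * X 0 0 * X 0 1^2 * X 1 1 + (-4:F) * V 0 1 * V 1 0^3 * X 0 0^2 * X 0 1^2 + (-4:F) * V 0 1^2 * X 1 0^2 + (-3:F) * V 0 1^2 * X 1 0^2 * X 1 1^2 + (6:F) * V 0 1^2 * X 0 0 * X 1 0^2 * X 1 1 + (-3:F) * V 0 1^2 * X 0 0^2 * X 1 0^2 + V 0 1^2 * V 1 1^2 * X 1 0^2 * X 1 1^2 + (-2:F) * V 0 1^2 * V 1 1^2 * X 0 1 * X 1 0^3 + (-2:F) * V 0 1^2 * V 1 1^2 * X 0 0 * X 1 0^2 * X 1 1 + V 0 1^2 * V 1 1^2 * X 0 0^2 * X 1 0^2 + (-2:F) * V 0 1^2 * V 1 0 * V 1 1 * X 1 0 * X 1 1^3 + (4:F) * V 0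 1^2 * V 1 0 * V 1 1 * X 0 1 * X 1 0^2 * X 1 1 + (6:F) * V 0 1^2 * V 1 0 * V 1 1 * X 0 0 * X 1 0 * X 1 1^2 + (-4:F) * V 0 1^2 * V 1 0 * V 1 1 * X 0 0 * X 0 1 * X 1 0^2 + (-6:F) * V 0 1^2 * V 1 0 * V 1 1 * X 0 0^2 * X 1 0 * X 1 1 + (2:F) * V 0 1^2 * V 1 0 * V 1 1 * X 0 0^3 * X 1 0 + V 0 1^2 * V 1 0^2 * X 1 1^4 + (-4:F) * V 0 1^2 * V 1 0^2 * X 0 1 * X 1 0 * X 1 1^2 + (4:F) * V 0 1^2 * V 1 0^2 * X 0 1^2 * X 1 0^2 + (-4:F) * V 0 1^2 * V 1 0^2 * X 0 0 * X 1 1^3 + (8:F) * V 0 1^2 * V 1 0^2 * X 0 0 * X 0 1 * X 1 0 * X 1 1 + (6:F) * V 0 1^2 * V 1 0^2 * X 0 0^2 * X 1 1^2 + (-4:F) * V 0 1^2 * V 1 0^2 * X 0 0^2 * X 0 1 * X 1 0 + (-4:F) * V 0 1^2 * V 1 0^2 * X 0 0^3 * X 1 1 + V 0 1^2 * V 1 0^2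 * X 0 0^4 + (2:F) * V 0 1^3 * V 1 1 * X 1 0^3 * X 1 1 + (-2:F) * V 0 1^3 * V 1 1 * X 0 0 * X 1 0^3 + (-4:F) * V 0 1^3 * V 1 0 * X 1 0^2 * X 1 1^2 + (8:F) * V 0 1^3 * V 1 0 * X 0 0 * X 1 0^2 * X 1 1 + (-4:F) * V 0 1^3 * V 1 0 * X 0 0^2 * X 1 0^2 + V 0 1^4 * X 1 0^4 + (2:F) * V 0 0 * V 1 0 * X 0 1 * X 1 1 + V 0 0 * V 1 0 * X 0 1 * X 1 1^3 + (-2:F) * V 0 0 * V 1 0 * X 0 1^2 * X 1 0 * X 1 1 + (-2:F) * V 0 0 * V 1 0 * X 0 0 * X 0 1 + (-3:F) * V 0 0 * V 1 0 * X 0 0 * X 0 1 * X 1 1^2 + (2:F) * V 0 0 * V 1 0 * X 0 0 * X 0 1^2 * X 1 0 + (3:F) * V 0 0 * V 1 0 * X 0 0^2 * X 0 1 * X 1 1 + (-1:F) * V 0 0 * V 1 0 * X 0 0^3 * X 0 1 + (-2:F) * V 0 0 * V 1 0^3 * X 0 1^3 * X 1 1 + (2:F) * V 0 0 * V 1 0^3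 * X 0 0 * X 0 1^3 + (2:F) * V 0 0 * V 0 1 * X 1 0 * X 1 1 + V 0 0 * V 0 1 * X 1 0 * X 1 1^3 + (-2:F) * V 0 0 * V 0 1 * X 0 1 * X 1 0^2 * X 1 1 + (-2:F) * V 0 0 * V 0 1 * X 0 0 * X 1 0 + (-3:F) * V 0 0 * V 0 1 * X 0 0 * X 1 0 * X 1 1^2 + (2:F) * V 0 0 * V 0 1 * X 0 0 * X 0 1 * X 1 0^2 + (3:F) * V 0 0 * V 0 1 * X 0 0^2 * X 1 0 * X 1 1 + (-1:F) * V 0 0 * V 0 1 * X 0 0^3 * X 1 0 + (2:F) * V 0 0 * V 0 1 * V 1 0^2 * X 0 1 * X 1 1^3 + (-4:F) * V 0 0 * V 0 1 * V 1 0^2 * X 0 1^2 * X 1 0 * X 1 1 + (-6:F) * V 0 0 * V 0 1 * V 1 0^2 * X 0 0 * X 0 1 * X 1 1^2 + (4:F) * V 0 0 * V 0 1 * V 1 0^2 * X 0 0 * X 0 1^2 * X 1 0 + (6:F) * V 0 0 * V 0 1 * V 1 0^2 * X 0 0^2 * X 0 1 * X 1 1 + (-2:F) * V 0 0 * V 0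 1 * V 1 0^2 * X 0 0^3 * X 0 1 + (2:F) * V 0 0 * V 0 1^2 * V 1 0 * X 1 0 * X 1 1^3 + (-4:F) * V 0 0 * V 0 1^2 * V 1 0 * X 0 1 * X 1 0^2 * X 1 1 + (-6:F) * V 0 0 * V 0 1^2 * V 1 0 * X 0 0 * X 1 0 * X 1 1^2 + (4:F) * V 0 0 * V 0 1^2 * V 1 0 * X 0 0 * X 0 1 * X 1 0^2 + (6:F) * V 0 0 * V 0 1^2 * V 1 0 * X 0 0^2 * X 1 0 * X 1 1 + (-2:F) * V 0 0 * V 0 1^2 * V 1 0 * X 0 0^3 * X 1 0 + (-2:F) * V 0 0 * V 0 1^3 * X 1 0^3 * X 1 1 + (2:F) * V 0 0 * V 0 1^3 * X 0 0 * X 1 0^3 + (4:F) * V 0 0^2 * X 0 1 * X 1 0 + V 0 0^2 * X 0 1 * X 1 0 * X 1 1^2 + (-2:F) * V 0 0^2 * X 0 0 * X 0 1 * X 1 0 * X 1 1 + V 0 0^2 * X 0 0^2 * X 0 1 * X 1 0 + V 0 0^2 * V 1 0^2 * X 0 1^2 * X 1 1^2 + (-2:F) * V 0 0^2 * V 1 0^2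 * X 0 1^3 * X 1 0 + (-2:F) * V 0 0^2 * V 1 0^2 * X 0 0 * X 0 1^2 * X 1 1 + V 0 0^2 * V 1 0^2 * X 0 0^2 * X 0 1^2 + (4:F) * V 0 0^2 * V 0 1 * V 1 0 * X 0 1 * X 1 0 * X 1 1^2 + (-8:F) * V 0 0^2 * V 0 1 * V 1 0 * X 0 0 * X 0 1 * X 1 0 * X 1 1 + (4:F) * V 0 0^2 * V 0 1 * V 1 0 * X 0 0^2 * X 0 1 * X 1 0 + V 0 0^2 * V 0 1^2 * X 1 0^2 * X 1 1^2 + (-2:F) * V 0 0^2 * V 0 1^2 * X 0 1 * X 1 0^3 + (-2:F) * V 0 0^2 * V 0 1^2 * X 0 0 * X 1 0^2 * X 1 1 + V 0 0^2 * V 0 1^2 * X 0 0^2 * X 1 0^2 + (2:F) * V 0 0^3 * V 1 0 * X 0 1^2 * X 1 0 * X 1 1 + (-2:F) * V 0 0^3 * V 1 0 * X 0 0 * X 0 1^2 * X 1 0 + (2:F) * V 0 0^3 * V 0 1 * X 0 1 * X 1 0^2 * X 1 1 + (-2:F) * V 0 0^3 * V 0 1 * X 0 0 * X 0 1 * X 1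 0^2 + V 0 0^4 * X 0 1^2 * X 1 0^2) * hdx +
      ((-3:F) + (-1:F) * X 1 1^2 + (-6:F) * X 0 1 * X 1 0 + (-2:F) * X 0 1 * X 1 0 * X 1 1^2 + (-4:F) * X 0 1^2 * X 1 0^2 + (-1:F) * X 0 0^2 + (-2:F) * X 0 0^2 * X 0 1 * X 1 0 + (2:F) * V 1 1^2 * X 0 1 * X 1 0 + V 1 1^2 * X 0 1 * X 1 0 * X 1 1^2 + (2:F) * V 1 1^2 * X 0 1^2 * X 1 0^2 + V 1 1^2 * X 0 0^2 * X 0 1 * X 1 0 + (-1:F) * V 1 0 * V 1 1 * X 0 1 * X 1 1 + (-1:F) * V 1 0 * V 1 1 * X 0 1 * X 1 1^3 + (-1:F) * V 1 0 * V 1 1 * X 0 1^2 * X 1 0 * X 1 1 + V 1 0 * V 1 1 * X 0 0 * X 0 1 + V 1 0 * V 1 1 * X 0 0 * X 0 1^2 * X 1 0 + V 1 0 * V 1 1 * X 0 0^3 * X 0 1 + (-2:F) * V 1 0^2 * X 0 1^2 + (-1:F) * V 1 0^2 * X 0 1^2 * X 1 1^2 + (-2:F) * V 1 0^2 * X 0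 1^3 * X 1 0 + (-1:F) * V 1 0^2 * X 0 0^2 * X 0 1^2 + (-1:F) * V 0 1 * V 1 1 * X 1 0 * X 1 1 + (-1:F) * V 0 1 * V 1 1 * X 1 0 * X 1 1^3 + (-1:F) * V 0 1 * V 1 1 * X 0 1 * X 1 0^2 * X 1 1 + V 0 1 * V 1 1 * X 0 0 * X 1 0 + V 0 1 * V 1 1 * X 0 0 * X 0 1 * X 1 0^2 + V 0 1 * V 1 1 * X 0 0^3 * X 1 0 + (-2:F) * V 0 1 * V 1 0 + V 0 1 * V 1 0 * X 1 1^4 + (-4:F) * V 0 1 * V 1 0 * X 0 1 * X 1 0 + (-2:F) * V 0 1 * V 1 0 * X 0 1^2 * X 1 0^2 + V 0 1 * V 1 0 * X 0 0^4 + (-2:F) * V 0 1^2 * X 1 0^2 + (-1:F) * V 0 1^2 * X 1 0^2 * X 1 1^2 + (-2:F) * V 0 1^2 * X 0 1 * X 1 0^3 + (-1:F) * V 0 1^2 * X 0 0^2 * X 1 0^2 + V 0 0 * V 1 0 * X 0 1 * X 1 1 + V 0 0 * V 1 0 * X 0 1 * X 1 1^3 + V 0 0 * V 1 0 * X 0 1^2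 * X 1 0 * X 1 1 + (-1:F) * V 0 0 * V 1 0 * X 0 0 * X 0 1 + (-1:F) * V 0 0 * V 1 0 * X 0 0 * X 0 1^2 * X 1 0 + (-1:F) * V 0 0 * V 1 0 * X 0 0^3 * X 0 1 + V 0 0 * V 0 1 * X 1 0 * X 1 1 + V 0 0 * V 0 1 * X 1 0 * X 1 1^3 + V 0 0 * V 0 1 * X 0 1 * X 1 0^2 * X 1 1 + (-1:F) * V 0 0 * V 0 1 * X 0 0 * X 1 0 + (-1:F) * V 0 0 * V 0 1 * X 0 0 * X 0 1 * X 1 0^2 + (-1:F) * V 0 0 * V 0 1 * X 0 0^3 * X 1 0 + (2:F) * V 0 0^2 * X 0 1 * X 1 0 + V 0 0^2 * X 0 1 * X 1 0 * X 1 1^2 + (2:F) * V 0 0^2 * X 0 1^2 * X 1 0^2 + V 0 0^2 * X 0 0^2 * X 0 1 * X 1 0) * h2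
end

section
/- Let F be a field of characteristic 2, let v, x ∈ SL₂(F) with tr(x) = 1 and tr([v,x]) = t. Then tr([[v,x],x]) = t² + t. -/
open Matrix MatrixGroups

private lemma adjugate_eq_aux {F : Type*} [Field F] (M : Matrix (Fin 2) (Fin 2) F) :
    adjugate M = Matrix.trace M • (1 : Matrix (Fin 2) (Fin 2) F) - M := by
  ext i j
  fin_cases i <;> fin_cases j <;>
    simp [adjugate_fin_two, Matrix.trace_fin_two, Matrix.one_apply, Matrix.smul_apply]

private lemma cayley_aux {F : Type*} [Field F] (M : Matrix (Fin 2) (Fin 2) F) :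
    M * M = Matrix.trace M • M - det M • (1 : Matrix (Fin 2) (Fin 2) F) := by
  ext i j
  fin_cases i <;> fin_cases j <;>
    simp [Matrix.mul_apply, Fin.sum_univ_two, Matrix.trace_fin_two, Matrix.det_fin_two,
      Matrix.one_apply, Matrix.smul_apply] <;> ring

theorem trace_double_commutator_char_two_trace_one {F : Type*} [Field F] [CharP F 2]
    (v x : SL(2, F)) (t : F)
    (hs : Matrix.trace ((x : Matrix (Fin 2) (Fin 2) F)) = 1)
    (ht : Matrix.trace ((v⁻¹ * x⁻¹ * v * x : SL(2, F)) : Matrix (Fin 2) (Fin 2) F) = t) :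
    Matrix.trace
        (((v⁻¹ * x⁻¹ * v * x)⁻¹ * x⁻¹ * (v⁻¹ * x⁻¹ * v * x) * x : SL(2, F)) :
          Matrix (Fin 2) (Fin 2) F) = t ^ 2 + t := by
  set g : SL(2, F) := v⁻¹ * x⁻¹ * v * x with hg
  set B : Matrix (Fin 2) (Fin 2) F := (x : Matrix (Fin 2) (Fin 2) F) with hB
  set C : Matrix (Fin 2) (Fin 2) F := ((v⁻¹ * x⁻¹ * v : SL(2, F)) : Matrix (Fin 2) (Fin 2) F)
    with hC
  set Y : Matrix (Fin 2) (Fin 2) F := (g : Matrix (Fin 2) (Fin 2) F) with hY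
  have hdetB : det B = 1 := x.prop
  have hdetY : det Y = 1 := g.prop
  have hYCB : Y = C * B := by
    rw [hY, hC, hB, hg, ← Matrix.SpecialLinearGroup.coe_mul]
  -- B² = B - 1
  have hB2 : B * B = B - 1 := by
    rw [cayley_aux, hs, hdetB, one_smul, one_smul]
  -- tr C = 1
  have htrC : Matrix.trace C = 1 := by
    rw [hC, Matrix.SpecialLinearGroup.coe_mul, Matrix.SpecialLinearGroup.coe_mul,
      Matrix.trace_mul_cycle, ← Matrix.SpecialLinearGroup.coe_mul,
      ← Matrix.SpecialLinearGroup.coe_mul, mul_inv_cancel, one_mul,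
      Matrix.SpecialLinearGroup.coe_inv, adjugate_eq_aux, hs, one_smul,
      Matrix.trace_sub, Matrix.trace_one]
    rw [hs]
    norm_num
  have hYB : Y * B = Y - C := by
    rw [hYCB, mul_assoc, hB2, mul_sub, mul_one, ← hYCB]
  have htrY : Matrix.trace Y = t := ht
  have htrYB : Matrix.trace (Y * B) = t - 1 := by
    rw [hYB, Matrix.trace_sub, htrY, htrC]
  -- coercions of inverses
  have hginv : ((g⁻¹ : SL(2, F)) : Matrix (Fin 2) (Fin 2) F)
      = t • (1 : Matrix (Fin 2) (Fin 2) F) - Y := by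
    rw [Matrix.SpecialLinearGroup.coe_inv, adjugate_eq_aux, htrY]
  have hxinv' : ((x⁻¹ : SL(2, F)) : Matrix (Fin 2) (Fin 2) F)
      = (1 : Matrix (Fin 2) (Fin 2) F) - B := by
    rw [Matrix.SpecialLinearGroup.coe_inv, adjugate_eq_aux, hs, one_smul]
  -- rewrite the goal matrix
  have hgoal : ((g⁻¹ * x⁻¹ * g * x : SL(2, F)) : Matrix (Fin 2) (Fin 2) F)
      = (t • (1 : Matrix (Fin 2) (Fin 2) F) - Y) * (1 - B) * Y * B := by
    rw [Matrix.SpecialLinearGroup.coe_mul, Matrix.SpecialLinearGroup.coe_mul,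
      Matrix.SpecialLinearGroup.coe_mul, hginv, hxinv']
  rw [hgoal]
  have expand : (t • (1 : Matrix (Fin 2) (Fin 2) F) - Y) * (1 - B) * Y * B
      = t • (Y * B) - t • (B * (Y * B)) - Y * (Y * B) + (Y * B) * (Y * B) := by
    simp only [sub_mul, mul_sub, smul_mul_assoc, mul_smul_comm, one_mul, mul_one, mul_assoc]
    abel
  rw [expand]
  have h1 : Matrix.trace (B * (Y * B)) = -1 := by
    rw [Matrix.trace_mul_comm, mul_assoc, hB2, mul_sub, mul_one, Matrix.trace_sub, hYB,
      Matrix.trace_sub, htrY, htrC]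
    ring
  have h2 : Matrix.trace (Y * (Y * B)) = t * (t - 1) - 1 := by
    rw [← mul_assoc, cayley_aux Y, htrY, hdetY, one_smul, sub_mul, smul_mul_assoc, one_mul,
      Matrix.trace_sub, Matrix.trace_smul, htrYB, hs, smul_eq_mul]
  have h3 : Matrix.trace ((Y * B) * (Y * B)) = (t - 1) * (t - 1) - 2 := by
    rw [cayley_aux (Y * B), htrYB, Matrix.det_mul, hdetY, hdetB, one_mul, one_smul,
      Matrix.trace_sub, Matrix.trace_smul, htrYB, Matrix.trace_one, smul_eq_mul]
    simp [Fintype.card_fin]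
  rw [Matrix.trace_add, Matrix.trace_sub, Matrix.trace_sub, Matrix.trace_smul,
    Matrix.trace_smul, htrYB, h1, h2, h3]
  have h2z : (2 : F) = 0 := CharTwo.two_eq_zero
  simp only [smul_eq_mul]
  linear_combination (-t) * h2z
end

section
/- Let q = 2^{2^n} with n ≥ 2 and let F = F_q. The image of the iterate f^m of f(u) = u² + u over F, where m = 2^n − 4 = Σ_{i=0}^{n-3} 2^{2+i}, is exactly the subfield F_{2^4} of F_q. -/
/-!
In characteristic 2 the map `f u = u² + u` satisfies `f^[2^k] u = u^(2^2^k) + u`, because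
`(a + b)^(2^j) = a^(2^j) + b^(2^j)` and the cross terms cancel in pairs. Hence `f^[2^n]` vanishes on `F_q` and the image
of `f^[2^n - 4]` lies in the kernel of `f^[4]`, i.e. among the at most 16 roots of `x^16 = x`.
Conversely `f` is at most 2-to-1, so the image of `f^[2^n - 4]` has at least
`q / 2^(2^n - 4) = 16` elements.
-/

open Finset Polynomial

section RootCounting

variable {R : Type*} [CommRing R] [IsDomain R] [DecidableEq R]

theorem Polynomial.card_filter_isRoot_le (s : Finset R) {p : R[X]} (hp : p ≠ 0) :
    #{x ∈ s | p.IsRoot x} ≤ p.natDegree :=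
  card_le_degree_of_subset_roots fun _ hx ↦ (mem_roots hp).2 (mem_filter.1 hx).2

theorem card_filter_pow_eq_self_le (s : Finset R) {d : ℕ} (hd : 2 ≤ d) :
    #{x ∈ s | x ^ d = x} ≤ d := by
  have hdeg : (X ^ d - X : R[X]).natDegree = d := by
    rw [natDegree_sub_eq_left_of_natDegree_lt] <;> simp; omega
  have hp : (X ^ d - X : R[X]) ≠ 0 := ne_zero_of_natDegree_gt (n := 0) (by omega)
  simpa [hdeg, sub_eq_zero] using card_filter_isRoot_le s hp

theorem card_filter_sq_add_self_eq_le (s : Finset R) (b : R) :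
    #{x ∈ s | x ^ 2 + x = b} ≤ 2 := by
  have hdeg : (X ^ 2 + X - C b : R[X]).natDegree = 2 := by compute_degree!
  have hp : (X ^ 2 + X - C b : R[X]) ≠ 0 := ne_zero_of_natDegree_gt (n := 0) (by omega)
  simpa [hdeg, sub_eq_zero] using card_filter_isRoot_le s hp

end RootCounting

theorem Fintype.card_le_pow_mul_card_image_iterate {α : Type*} [Fintype α] [DecidableEq α]
    {g : α → α} {d : ℕ} (hg : ∀ b, #{a | g a = b} ≤ d) (k : ℕ) :
    Fintype.card α ≤ d ^ k * #(univ.image g^[k]) := by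
  induction k with
  | zero => simp
  | succ k ih =>
    have hfiber : ∀ b ∈ (univ.image g^[k]).image g, #{a ∈ univ.image g^[k] | g a = b} ≤ d :=
      fun b _ ↦ (card_le_card (filter_subset_filter _ (subset_univ _))).trans (hg b)
    calc Fintype.card α ≤ d ^ k * #(univ.image g^[k]) := ih
      _ ≤ d ^ k * (d * #((univ.image g^[k]).image g)) :=
        Nat.mul_le_mul_left _ (card_le_mul_card_image _ d hfiber)
      _ = d ^ (k + 1) * #(univ.image g^[k + 1]) := by
        rw [Function.iterate_succ', image_image, pow_succ, mul_assoc]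

theorem iterate_two_pow_sq_add_self {R : Type*} [CommRing R] [CharP R 2] (k : ℕ) (x : R) :
    (fun u : R ↦ u ^ 2 + u)^[2 ^ k] x = x ^ 2 ^ 2 ^ k + x := by
  induction k generalizing x with
  | zero => simp
  | succ k ih =>
    have hexp : 2 ^ 2 ^ (k + 1) = 2 ^ 2 ^ k * 2 ^ 2 ^ k := by rw [← pow_add, ← mul_two, pow_succ]
    calc (fun u : R ↦ u ^ 2 + u)^[2 ^ (k + 1)] x
        = (fun u : R ↦ u ^ 2 + u)^[2 ^ k] ((fun u : R ↦ u ^ 2 + u)^[2 ^ k] x) := by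
          rw [pow_succ, mul_two, Function.iterate_add_apply]
      _ = (x ^ 2 ^ 2 ^ k + x) ^ 2 ^ 2 ^ k + (x ^ 2 ^ 2 ^ k + x) := by rw [ih, ih]
      _ = x ^ 2 ^ 2 ^ (k + 1) + x + (x ^ 2 ^ 2 ^ k + x ^ 2 ^ 2 ^ k) := by
        rw [add_pow_char_pow, hexp, pow_mul]; ring
      _ = x ^ 2 ^ 2 ^ (k + 1) + x := by rw [CharTwo.add_self_eq_zero, add_zero]

theorem range_iterate_eq_subfield {F : Type*} [Field F] [Fintype F] (n : ℕ)
    (hn : 2 ≤ n) (hq : Fintype.card F = 2 ^ 2 ^ n) :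
    Set.range ((fun u : F => u ^ 2 + u)^[2 ^ n - 4]) = {x : F | x ^ 16 = x} := by
  classical
  have := charP_of_card_eq_prime_pow hq
  set f : F → F := fun u ↦ u ^ 2 + u
  have hm : 2 ^ n - 4 + 2 ^ 2 = 2 ^ n := by
    have : 2 ^ 2 ≤ 2 ^ n := Nat.pow_le_pow_right two_pos hn
    omega
  have himage_sub : univ.image f^[2 ^ n - 4] ⊆ {x ∈ (univ : Finset F) | x ^ 16 = x} := by
    simp only [subset_iff, mem_image, mem_filter, mem_univ, true_and, forall_exists_index]
    rintro _ u rfl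
    have hkill : f^[2 ^ 2] (f^[2 ^ n - 4] u) = 0 := by
      rw [← Function.iterate_add_apply, Nat.add_comm, hm, iterate_two_pow_sq_add_self, ← hq,
        FiniteField.pow_card, CharTwo.add_self_eq_zero]
    rwa [iterate_two_pow_sq_add_self, CharTwo.add_eq_zero] at hkill
  have himage_card : 16 ≤ #(univ.image f^[2 ^ n - 4]) := by
    have := Fintype.card_le_pow_mul_card_image_iterate
      (g := f) (card_filter_sq_add_self_eq_le univ) (2 ^ n - 4)
    rw [hq, ← hm, pow_add] at this
    exact Nat.le_of_mul_le_mul_left this (by positivity)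
  have heq := eq_of_subset_of_card_le himage_sub
    ((card_filter_pow_eq_self_le univ (by norm_num)).trans himage_card)
  simpa [Set.ext_iff] using congrArg (fun s : Finset F ↦ (s : Set F)) heq
end

section
/- The trace polynomial theorem: for every word w in the free group F₂ = ⟨x,y⟩, there is a polynomial P_w(s,t,u) ∈ ℤ[s,t,u] such that for every commutative ring R and all A, B ∈ SL₂(R), tr(w(A,B)) = P_w(tr(A), tr(B), tr(AB)). -/
/-!
By Cayley–Hamilton and its polarization `MN + NM = tr M · N + tr N · M + (tr MN - tr M tr N)`,
for `A, B ∈ SL₂(R)` the span of `1, A, B, AB` over `ℤ[tr A, tr B, tr AB]` is stable under left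
multiplication by `A`, `B`, `A⁻¹ = tr A - A` and `B⁻¹ = tr B - B`, and the new coefficients are
given by polynomials in `s = tr A, t = tr B, u = tr AB` that do not depend on `R`, `A` or `B`.
Hence `w(A, B) = c₀ + c₁ A + c₂ B + c₃ AB` for universal `cᵢ ∈ ℤ[s, t, u]`, and taking traces gives
`P_w = 2 c₀ + s c₁ + t c₂ + u c₃`.
-/

open Matrix MatrixGroups MvPolynomial

namespace Matrix

variable {R : Type*} [CommRing R]

theorem mul_self_fin_two (M : Matrix (Fin 2) (Fin 2) R) :
    M * M = M.trace • M - M.det • (1 : Matrix (Fin 2) (Fin 2) R) := by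
  ext i j
  fin_cases i <;> fin_cases j <;>
    simp only [Fin.isValue, Fin.zero_eta, Fin.mk_one, mul_apply, Fin.sum_univ_two, trace_fin_two,
      det_fin_two, sub_apply, smul_apply, smul_eq_mul, one_apply_eq, one_apply_ne, ne_eq,
      zero_ne_one, one_ne_zero, not_false_eq_true] <;> ring

theorem mul_add_mul_fin_two (M N : Matrix (Fin 2) (Fin 2) R) :
    M * N + N * M =
      M.trace • N + N.trace • M +
        ((M * N).trace - M.trace * N.trace) • (1 : Matrix (Fin 2) (Fin 2) R) := by
  ext i j
  fin_cases i <;> fin_cases j <;>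
    simp only [Fin.isValue, Fin.zero_eta, Fin.mk_one, mul_apply, Fin.sum_univ_two, trace_fin_two,
      add_apply, smul_apply, smul_eq_mul, one_apply_eq, one_apply_ne, ne_eq, zero_ne_one,
      one_ne_zero, not_false_eq_true] <;> ring

namespace SpecialLinearGroup

theorem coe_mul_self_fin_two (A : SL(2, R)) :
    (A : Matrix (Fin 2) (Fin 2) R) * A =
      (A : Matrix (Fin 2) (Fin 2) R).trace • (A : Matrix (Fin 2) (Fin 2) R) - 1 := by
  rw [mul_self_fin_two, A.det_coe, one_smul]

theorem coe_inv_mul_fin_two (A : SL(2, R)) (M : Matrix (Fin 2) (Fin 2) R) :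
    ((A⁻¹ : SL(2, R)) : Matrix (Fin 2) (Fin 2) R) * M =
      (A : Matrix (Fin 2) (Fin 2) R).trace • M - A * M := by
  have hinv : ((A⁻¹ : SL(2, R)) : Matrix (Fin 2) (Fin 2) R) =
      (A : Matrix (Fin 2) (Fin 2) R).trace • 1 - A := by
    rw [coe_inv, adjugate_fin_two]
    ext i j
    fin_cases i <;> fin_cases j <;> simp [trace_fin_two]
  rw [hinv, sub_mul, smul_mul_assoc, one_mul]

end SpecialLinearGroup

end Matrix

noncomputable section

namespace TracePolynomial

local notation "Q" => MvPolynomial (Fin 3) ℤ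

variable {R : Type*} [CommRing R]

local notation "M₂" => Matrix (Fin 2) (Fin 2) R

def traces (A B : SL(2, R)) : Fin 3 → R :=
  ![(A : M₂).trace, (B : M₂).trace, ((A * B : SL(2, R)) : M₂).trace]

def toMatrix (A B : SL(2, R)) (c : Fin 4 → Q) : M₂ :=
  aeval (traces A B) (c 0) • 1 + aeval (traces A B) (c 1) • (A : M₂) +
    aeval (traces A B) (c 2) • (B : M₂) + aeval (traces A B) (c 3) • ((A : M₂) * B)

def traceCoeffs (c : Fin 4 → Q) : Q := 2 * c 0 + X 0 * c 1 + X 1 * c 2 + X 2 * c 3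

def mulLeftA (c : Fin 4 → Q) : Fin 4 → Q := ![-c 1, c 0 + X 0 * c 1, -c 3, c 2 + X 0 * c 3]

def mulLeftB (c : Fin 4 → Q) : Fin 4 → Q :=
  ![(X 2 - X 0 * X 1) * c 1 - c 2 - X 0 * c 3, X 1 * c 1 + c 3,
    c 0 + X 0 * c 1 + X 1 * c 2 + X 2 * c 3, -c 1]

variable (A B : SL(2, R))

theorem trace_toMatrix (c : Fin 4 → Q) :
    (toMatrix A B c).trace = aeval (traces A B) (traceCoeffs c) := by
  simp only [toMatrix, traceCoeffs, traces, Matrix.SpecialLinearGroup.coe_mul, trace_add, trace_smul,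
    trace_one, Fintype.card_fin, Nat.cast_ofNat, smul_eq_mul, map_add, map_mul, aeval_ofNat,
    aeval_X, cons_val_zero, cons_val_one, cons_val]
  ring

theorem toMatrix_smul_sub (p : Q) (c d : Fin 4 → Q) :
    toMatrix A B (p • c - d) = aeval (traces A B) p • toMatrix A B c - toMatrix A B d := by
  simp only [toMatrix, Pi.sub_apply, Pi.smul_apply, smul_eq_mul, map_sub, map_mul]
  module

theorem mul_toMatrix_A (c : Fin 4 → Q) :
    (A : M₂) * toMatrix A B c = toMatrix A B (mulLeftA c) := by
  have hAA := A.coe_mul_self_fin_two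
  have hAAB : (A : M₂) * (A * B) = (A : M₂).trace • ((A : M₂) * B) - B := by
    rw [← mul_assoc, hAA, sub_mul, smul_mul_assoc, one_mul]
  simp only [toMatrix, mulLeftA, mul_add, mul_smul_comm, mul_one, hAA, hAAB, traces,
    Matrix.SpecialLinearGroup.coe_mul, Fin.isValue, cons_val_zero, cons_val_one, cons_val, map_neg,
    map_add, map_mul, aeval_X, neg_smul]
  module

theorem mul_toMatrix_B (c : Fin 4 → Q) :
    (B : M₂) * toMatrix A B c = toMatrix A B (mulLeftB c) := by
  have hBA : (B : M₂) * A = _ := eq_sub_of_add_eq' (mul_add_mul_fin_two (A : M₂) B)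
  have hBB := B.coe_mul_self_fin_two
  have hBAB : (B : M₂) * (A * B) = A + ((A : M₂) * B).trace • (B : M₂) - (A : M₂).trace • 1 := by
    rw [← mul_assoc, hBA]
    simp only [add_mul, sub_mul, smul_mul_assoc, one_mul, mul_assoc, hBB, mul_sub, mul_smul_comm,
      mul_one]
    module
  simp only [toMatrix, mulLeftB, mul_add, mul_smul_comm, mul_one, hBA, hBB, hBAB, traces,
    Matrix.SpecialLinearGroup.coe_mul, Fin.isValue, cons_val_zero, cons_val_one, cons_val, map_sub,
    map_neg, map_add, map_mul, aeval_X, neg_smul]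
  module

theorem coe_inv_mul_toMatrix {g : SL(2, R)} {p : Q} {L : (Fin 4 → Q) → Fin 4 → Q}
    (htrace : (g : M₂).trace = aeval (traces A B) p)
    (hmul : ∀ c, (g : M₂) * toMatrix A B c = toMatrix A B (L c)) (c : Fin 4 → Q) :
    ((g⁻¹ : SL(2, R)) : M₂) * toMatrix A B c = toMatrix A B (p • c - L c) := by
  rw [SpecialLinearGroup.coe_inv_mul_fin_two, toMatrix_smul_sub, htrace, hmul]

theorem exists_mul_toMatrix_eq (w : FreeGroup (Fin 2)) :
    ∃ f : (Fin 4 → Q) → Fin 4 → Q,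
      ∀ (R : Type) [CommRing R] (A B : SL(2, R)) (c : Fin 4 → Q),
        ((FreeGroup.lift ![A, B] w : SL(2, R)) : Matrix (Fin 2) (Fin 2) R) * toMatrix A B c =
          toMatrix A B (f c) := by
  -- Quantifying over all `c` makes the product case a composition of coefficient maps.
  induction w using FreeGroup.induction_on with
  | C1 => exact ⟨id, fun R _ A B c => by simp⟩
  | of x =>
    fin_cases x
    · exact ⟨mulLeftA, fun R _ A B c => by simpa using mul_toMatrix_A A B c⟩
    · exact ⟨mulLeftB, fun R _ A B c => by simpa using mul_toMatrix_B A B c⟩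
  | inv_of x _ =>
    fin_cases x
    · refine ⟨fun c => (X 0 : Q) • c - mulLeftA c, fun R _ A B c => ?_⟩
      simpa using coe_inv_mul_toMatrix A B (by simp [traces]) (mul_toMatrix_A A B) c
    · refine ⟨fun c => (X 1 : Q) • c - mulLeftB c, fun R _ A B c => ?_⟩
      simpa using coe_inv_mul_toMatrix A B (by simp [traces]) (mul_toMatrix_B A B) c
  | mul x y hx hy =>
    obtain ⟨f, hf⟩ := hx
    obtain ⟨g, hg⟩ := hy
    refine ⟨f ∘ g, fun R _ A B c => ?_⟩
    rw [Function.comp_apply, ← hf, ← hg, ← mul_assoc, map_mul]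
    rfl

end TracePolynomial

end

open TracePolynomial

theorem trace_polynomial (w : FreeGroup (Fin 2)) :
    ∃ P : MvPolynomial (Fin 3) ℤ,
      ∀ (R : Type) [CommRing R] (A B : SL(2, R)),
        Matrix.trace ((FreeGroup.lift ![A, B] w : SL(2, R)) : Matrix (Fin 2) (Fin 2) R) =
          MvPolynomial.aeval
            ![Matrix.trace ((A : Matrix (Fin 2) (Fin 2) R)),
              Matrix.trace ((B : Matrix (Fin 2) (Fin 2) R)),
              Matrix.trace ((A * B : SL(2, R)) : Matrix (Fin 2) (Fin 2) R)] P := by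
  obtain ⟨f, hf⟩ := exists_mul_toMatrix_eq w
  refine ⟨traceCoeffs (f ![1, 0, 0, 0]), fun R _ A B => ?_⟩
  have hone : toMatrix A B ![1, 0, 0, 0] = 1 := by simp [toMatrix]
  calc _ = (toMatrix A B (f ![1, 0, 0, 0])).trace := by rw [← hf, hone, mul_one]
    _ = _ := trace_toMatrix A B _
end
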